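/- Define h : ℝ² → [0,∞) by h(z) := √((z₁ − 2)² + (z₂ − 1)²). Then opt_h((0,0),(6,5)) = (1/2)·ln(√2 − 1) − (1/2)·ln(√5 − 2) − 1/√2 + √5 + 17·√2. -/

import Mathlib

/-- An `(x,y)`-path: a function `f : [x₁+x₂, y₁+y₂] → ℝ` with `f(x₁+x₂) = x₁`,
`f(y₁+y₂) = y₁` such that both `f` and `s ↦ s − f s` are monotone non-decreasing;
it encodes the monotone unit-`ℓ¹`-speed curve `s ↦ (f s, s − f s)` from `x` to `y`. -/
def IsPath (x y : ℝ × ℝ) (f : ℝ → ℝ) : Prop :=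
  x.1 ≤ y.1 ∧ x.2 ≤ y.2 ∧
  f (x.1 + x.2) = x.1 ∧ f (y.1 + y.2) = y.1 ∧
  MonotoneOn f (Set.Icc (x.1 + x.2) (y.1 + y.2)) ∧
  MonotoneOn (fun s => s - f s) (Set.Icc (x.1 + x.2) (y.1 + y.2))

/-- The cost of an `(x,y)`-path `f` with respect to `h`. -/
noncomputable def pathCost (h : ℝ × ℝ → ℝ) (x y : ℝ × ℝ) (f : ℝ → ℝ) : ℝ :=
  ∫ s in (x.1 + x.2)..(y.1 + y.2), h (f s, s - f s)

/-- `opt_h(x,y)`: the infimum of the costs of all `(x,y)`-paths. -/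
noncomputable def optCost (h : ℝ × ℝ → ℝ) (x y : ℝ × ℝ) : ℝ :=
  sInf (pathCost h x y '' {f : ℝ → ℝ | IsPath x y f})

/-!
A path passes through each antidiagonal `{a + b = s}` of the parameter square exactly once, at a
point with `b ≥ 0`. So its cost is at least the integral over `s` of the distance from `(2, 1)` to
the admissible part of that antidiagonal. The pointwise nearest points form a monotone path
themselves (first along the axis `b = 0`, then along the perpendicular to `(2, 1)` on each
antidiagonal), hence this integral is the optimal cost. It splits into `∫₀¹ √((s-2)² + 1)`,
computed with the primitive `(u √(u² + 1) + arsinh u) / 2`, and `∫₁¹¹ |s - 3| / √2 = 17 √2`.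
-/

open Real MeasureTheory Set intervalIntegral

namespace IsPath

variable {x y : ℝ × ℝ} {f : ℝ → ℝ}

theorem add_le_add (hf : IsPath x y f) : x.1 + x.2 ≤ y.1 + y.2 :=
  _root_.add_le_add hf.1 hf.2.1

theorem lipschitzOnWith (hf : IsPath x y f) :
    LipschitzOnWith 1 f (Icc (x.1 + x.2) (y.1 + y.2)) := by
  obtain ⟨-, -, -, -, hmono, hmono_sub⟩ := hf
  refine LipschitzOnWith.of_le_add fun s hs t ht => ?_
  rw [Real.dist_eq]
  rcases le_total s t with hst | hts
  · linarith [hmono hs ht hst, abs_nonneg (s - t)]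
  · linarith [hmono_sub ht hs hts, le_abs_self (s - t)]

theorem continuousOn (hf : IsPath x y f) : ContinuousOn f (Icc (x.1 + x.2) (y.1 + y.2)) :=
  hf.lipschitzOnWith.continuousOn

theorem snd_le_sub (hf : IsPath x y f) {s : ℝ} (hs : s ∈ Icc (x.1 + x.2) (y.1 + y.2)) :
    x.2 ≤ s - f s := by
  have := hf.2.2.2.2.2 (left_mem_Icc.2 hf.add_le_add) hs hs.1
  simp only [hf.2.2.1] at this
  linarith

theorem intervalIntegrable_cost {h : ℝ × ℝ → ℝ} (hh : Continuous h) (hf : IsPath x y f) :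
    IntervalIntegrable (fun s => h (f s, s - f s)) volume (x.1 + x.2) (y.1 + y.2) := by
  refine ContinuousOn.intervalIntegrable ?_
  rw [uIcc_of_le hf.add_le_add]
  exact hh.comp_continuousOn ((hf.continuousOn).prodMk (continuousOn_id.sub hf.continuousOn))

end IsPath

theorem optCost_eq_pathCost_of_forall_le {h : ℝ × ℝ → ℝ} {x y : ℝ × ℝ} {f₀ : ℝ → ℝ}
    (hf₀ : IsPath x y f₀) (hle : ∀ f, IsPath x y f → pathCost h x y f₀ ≤ pathCost h x y f) :
    optCost h x y = pathCost h x y f₀ :=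
  IsLeast.csInf_eq ⟨⟨f₀, hf₀, rfl⟩, by rintro _ ⟨f, hf, rfl⟩; exact hle f hf⟩

theorem optCost_eq_integral_of_lowerEnvelope {h : ℝ × ℝ → ℝ} (hh : Continuous h)
    {x y : ℝ × ℝ} {g f₀ : ℝ → ℝ}
    (hg : ∀ f, IsPath x y f → ∀ s ∈ Icc (x.1 + x.2) (y.1 + y.2), g s ≤ h (f s, s - f s))
    (hf₀ : IsPath x y f₀) (hf₀g : ∀ s ∈ Icc (x.1 + x.2) (y.1 + y.2), h (f₀ s, s - f₀ s) = g s) :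
    optCost h x y = ∫ s in (x.1 + x.2)..(y.1 + y.2), g s := by
  have hxy := hf₀.add_le_add
  rw [optCost_eq_pathCost_of_forall_le hf₀ fun f hf => ?_]
  · exact integral_congr fun s hs => hf₀g s (by rwa [uIcc_of_le hxy] at hs)
  · refine integral_mono_on hxy (hf₀.intervalIntegrable_cost hh) (hf.intervalIntegrable_cost hh)
      fun s hs => ?_
    rw [hf₀g s hs]
    exact hg f hf s hs

theorem hasDerivAt_sqrt_sq_add_one_primitive (u : ℝ) :
    HasDerivAt (fun u => (u * √(u ^ 2 + 1) + arsinh u) / 2) √(u ^ 2 + 1) u := by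
  have hpos : 0 < u ^ 2 + 1 := by positivity
  have hsqrt : HasDerivAt (fun u => √(u ^ 2 + 1)) (2 * u / (2 * √(u ^ 2 + 1))) u := by
    simpa using ((hasDerivAt_pow 2 u).add_const 1).sqrt hpos.ne'
  refine ((((hasDerivAt_id' u).mul hsqrt).add (hasDerivAt_arsinh u)).div_const 2).congr_deriv ?_
  have hr : √(u ^ 2 + 1) ^ 2 = u ^ 2 + 1 := sq_sqrt hpos.le
  have hr0 : 0 < √(u ^ 2 + 1) := sqrt_pos.2 hpos
  rw [add_comm 1 (u ^ 2)]
  field_simp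
  linarith

theorem integral_sqrt_sq_add_one (a b : ℝ) :
    ∫ u in a..b, √(u ^ 2 + 1)
      = (b * √(b ^ 2 + 1) + arsinh b) / 2 - (a * √(a ^ 2 + 1) + arsinh a) / 2 :=
  integral_eq_sub_of_hasDerivAt (fun u _ => hasDerivAt_sqrt_sq_add_one_primitive u)
    ((by fun_prop : Continuous fun u : ℝ => √(u ^ 2 + 1)).intervalIntegrable a b)

theorem integral_abs_sub {a b c : ℝ} (hac : a ≤ c) (hcb : c ≤ b) :
    ∫ s in a..b, |s - c| = ((c - a) ^ 2 + (b - c) ^ 2) / 2 := by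
  have hcont : Continuous fun s : ℝ => |s - c| := by fun_prop
  rw [← integral_add_adjacent_intervals (hcont.intervalIntegrable a c)
    (hcont.intervalIntegrable c b), integral_of_le hac, integral_of_le hcb,
    ← uIoc_of_ge hac, ← uIoc_of_le hcb]
  have hleft := integral_pow_abs_sub_uIoc (a := c) (b := a) 1
  have hright := integral_pow_abs_sub_uIoc (a := c) (b := b) 1
  simp only [pow_one] at hleft hright
  rw [hleft, hright, abs_of_nonpos (sub_nonpos.2 hac), abs_of_nonneg (sub_nonneg.2 hcb)]
  ring

/-- The distance from `(2, 1)` to `{(a, s - a) | s - a ≥ 0}`: for `s > 1` the foot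
`((s + 1) / 2, (s - 1) / 2)` of the perpendicular lies in this set, otherwise the nearest
point is its endpoint `(s, 0)`. -/
noncomputable def envelope (s : ℝ) : ℝ :=
  if s ≤ 1 then √((s - 2) ^ 2 + 1) else |s - 3| / √2

noncomputable def optimalPath (s : ℝ) : ℝ :=
  if s ≤ 1 then s else (s + 1) / 2

theorem optimalPath_isPath : IsPath ((0 : ℝ), (0 : ℝ)) ((6 : ℝ), (5 : ℝ)) optimalPath := by
  refine ⟨by norm_num, by norm_num, by norm_num [optimalPath], by norm_num [optimalPath],
    fun s _ t _ hst => ?_, fun s _ t _ hst => ?_⟩ <;>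
  · simp only [optimalPath]
    split_ifs <;> linarith

theorem sqrt_optimalPath (s : ℝ) :
    √((optimalPath s - 2) ^ 2 + (s - optimalPath s - 1) ^ 2) = envelope s := by
  unfold optimalPath envelope
  split_ifs
  · ring_nf
  · rw [show ((s + 1) / 2 - 2) ^ 2 + (s - (s + 1) / 2 - 1) ^ 2 = (s - 3) ^ 2 / 2 by ring,
      sqrt_div (sq_nonneg _), sqrt_sq_eq_abs]

theorem envelope_le {a s : ℝ} (hb : 0 ≤ s - a) :
    envelope s ≤ √((a - 2) ^ 2 + (s - a - 1) ^ 2) := by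
  unfold envelope
  split_ifs with hs
  · apply sqrt_le_sqrt
    nlinarith [mul_nonneg hb (by linarith : (0 : ℝ) ≤ 1 - a)]
  · rw [← sqrt_sq_eq_abs, ← sqrt_div (sq_nonneg _)]
    apply sqrt_le_sqrt
    nlinarith [sq_nonneg ((a - 2) - (s - a - 1))]

theorem envelope_of_one_le {s : ℝ} (hs : 1 ≤ s) : envelope s = |s - 3| / √2 := by
  rcases hs.eq_or_lt with rfl | hs
  · rw [envelope, if_pos le_rfl, show ((1 : ℝ) - 2) ^ 2 + 1 = 2 by norm_num,
      show |(1 : ℝ) - 3| = 2 by norm_num, eq_div_iff (sqrt_ne_zero'.2 two_pos),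
      mul_self_sqrt zero_le_two]
  · rw [envelope, if_neg hs.not_ge]

theorem continuous_envelope : Continuous envelope := by
  refine Continuous.if_le (by fun_prop) (by fun_prop) continuous_id continuous_const ?_
  rintro _ rfl
  simpa [envelope] using envelope_of_one_le le_rfl

theorem integral_envelope :
    ∫ s in (0 : ℝ)..11, envelope s
      = 1 / 2 * log (√2 - 1) - 1 / 2 * log (√5 - 2) - 1 / √2 + √5 + 17 * √2 := by
  rw [← integral_add_adjacent_intervals (continuous_envelope.intervalIntegrable 0 1)
    (continuous_envelope.intervalIntegrable 1 11)]
  have hleft : ∫ s in (0 : ℝ)..1, envelope s = ∫ s in (0 : ℝ)..1, √((s - 2) ^ 2 + 1) :=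
    integral_congr fun s hs => by
      rw [uIcc_of_le zero_le_one] at hs
      simp [envelope, hs.2]
  have hright : ∫ s in (1 : ℝ)..11, envelope s = ∫ s in (1 : ℝ)..11, |s - 3| / √2 :=
    integral_congr fun s hs => by
      rw [uIcc_of_le (by norm_num : (1 : ℝ) ≤ 11)] at hs
      exact envelope_of_one_le hs.1
  rw [hleft, hright, integral_comp_sub_right (fun u => √(u ^ 2 + 1)), integral_sqrt_sq_add_one,
    intervalIntegral.integral_div, integral_abs_sub (by norm_num) (by norm_num)]
  have harsinh_neg_one : arsinh (1 - 2) = log (√2 - 1) := by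
    norm_num [arsinh]
    ring_nf
  have harsinh_neg_two : arsinh (0 - 2) = log (√5 - 2) := by
    norm_num [arsinh]
    ring_nf
  have h34 : (34 : ℝ) / √2 = 17 * √2 := by
    rw [show (34 : ℝ) = 17 * 2 by norm_num, mul_div_assoc, div_sqrt]
  rw [harsinh_neg_one, harsinh_neg_two, ← sqrt_div_self']
  norm_num
  rw [h34]
  ring

theorem optCost_example :
    optCost (fun z : ℝ × ℝ => Real.sqrt ((z.1 - 2) ^ 2 + (z.2 - 1) ^ 2))
        ((0 : ℝ), (0 : ℝ)) ((6 : ℝ), (5 : ℝ))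
      = 1 / 2 * Real.log (Real.sqrt 2 - 1) - 1 / 2 * Real.log (Real.sqrt 5 - 2)
        - 1 / Real.sqrt 2 + Real.sqrt 5 + 17 * Real.sqrt 2 := by
  rw [optCost_eq_integral_of_lowerEnvelope (by fun_prop)
    (fun f hf s hs => envelope_le (hf.snd_le_sub hs)) optimalPath_isPath
    (fun s _ => sqrt_optimalPath s)]
  convert integral_envelope using 2 <;> norm_num
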